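/- Let y ∈ H²(0,1) with y'(0) = y'(1) = 0, let Q_h be the L² projection onto S̃_h¹(0,1), and assume the uniform partition with mesh size h. Then ‖y' − (Q_h y)'‖_{L²(0,1)} ≤ (1/2)(√2 + 4√3) h ‖y''‖_{L²(0,1)}. -/

import Mathlib

open MeasureTheory intervalIntegral

/-- Membership in the modified piecewise linear finite element space
S̃_h¹(0,1). -/
def ModPW (n : ℕ) (x : ℕ → ℝ) (f : ℝ → ℝ) : Prop :=
  ContinuousOn f (Set.Icc 0 1) ∧
  (∀ t ∈ Set.Icc (x 0) (x 1), f t = f (x 1)) ∧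
  (∀ t ∈ Set.Icc (x (n - 1)) (x n), f t = f (x (n - 1))) ∧
  (∀ i, 1 ≤ i → i + 1 ≤ n - 1 →
    ∃ α β : ℝ, ∀ t ∈ Set.Icc (x i) (x (i + 1)), f t = α + β * t)

/-!
Compare `Q_h y` with the interpolant `I_h y ∈ S̃_h¹`, which interpolates `y` at the interior nodes
and is constant on the two boundary cells. On every cell `y' - (I_h y)'` vanishes somewhere (by the
mean value theorem, and by `y'(0) = y'(1) = 0` on the boundary cells) and `y - I_h y` vanishes at a
node, so the Poincaré inequality `∫ f² ≤ h²/2 ∫ f'²` gives `‖y' - (I_h y)'‖ ≤ h ‖y''‖ / √2` and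
`‖y - I_h y‖ ≤ h ‖y' - (I_h y)'‖ / √2`. As `Q_h y - I_h y` is affine on every cell, the inverse
inequality and the Pythagoras relation `‖Q_h y - I_h y‖ ≤ ‖y - I_h y‖` (valid since
`Q_h y - I_h y ∈ S̃_h¹`) give `‖(Q_h y - I_h y)'‖ ≤ √12 h⁻¹ ‖y - I_h y‖ ≤ √3 h ‖y''‖`. The triangle
inequality, applied cell by cell, bounds `‖y' - (Q_h y)'‖` by `(√2/2 + √3) h ‖y''‖`.
-/

open Set

section IntervalInequalities

variable {a b : ℝ} {f f' : ℝ → ℝ}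

theorem sq_integral_le_mul_integral_sq (hab : a ≤ b) (hf : IntervalIntegrable f volume a b)
    (hf2 : IntervalIntegrable (fun t => f t ^ 2) volume a b) :
    (∫ t in a..b, f t) ^ 2 ≤ (b - a) * ∫ t in a..b, f t ^ 2 := by
  have hquad : ∀ x : ℝ,
      0 ≤ (b - a) * (x * x) + (2 * ∫ t in a..b, f t) * x + ∫ t in a..b, f t ^ 2 := by
    intro x
    calc 0 ≤ ∫ t in a..b, (x + f t) ^ 2 := integral_nonneg hab fun _ _ => sq_nonneg _
      _ = _ := by
        simp_rw [add_sq]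
        rw [intervalIntegral.integral_add (intervalIntegrable_const.add (hf.const_mul _)) hf2,
          intervalIntegral.integral_add intervalIntegrable_const (hf.const_mul _),
          intervalIntegral.integral_const_mul,
          intervalIntegral.integral_const, smul_eq_mul]
        ring
  have := discrim_le_zero hquad
  rw [discrim] at this
  linarith

theorem sq_le_abs_sub_mul_integral_sq_of_hasDerivAt {ξ t : ℝ} (hξ : ξ ∈ Icc a b)
    (ht : t ∈ Icc a b) (hd : ∀ s, HasDerivAt f (f' s) s)
    (hf' : IntervalIntegrable f' volume a b)
    (hf'2 : IntervalIntegrable (fun s => f' s ^ 2) volume a b) (h0 : f ξ = 0) :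
    f t ^ 2 ≤ |t - ξ| * ∫ s in a..b, f' s ^ 2 := by
  have hsub : ∀ {u v}, u ∈ Icc a b → v ∈ Icc a b → uIcc u v ⊆ uIcc a b := fun hu hv =>
    uIcc_subset_uIcc (Icc_subset_uIcc hu) (Icc_subset_uIcc hv)
  have hpiece : ∀ {u v}, u ∈ Icc a b → v ∈ Icc a b → u ≤ v →
      (∫ s in u..v, f' s) ^ 2 ≤ (v - u) * ∫ s in a..b, f' s ^ 2 := fun hu hv huv =>
    (sq_integral_le_mul_integral_sq huv (hf'.mono_set (hsub hu hv))
      (hf'2.mono_set (hsub hu hv))).trans <| mul_le_mul_of_nonneg_left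
        (integral_mono_interval hu.1 huv hv.2 (ae_of_all _ fun _ => sq_nonneg _) hf'2)
        (sub_nonneg.2 huv)
  have hftc : f t = ∫ s in ξ..t, f' s := by
    rw [integral_eq_sub_of_hasDerivAt (fun s _ => hd s) (hf'.mono_set (hsub hξ ht)), h0,
      sub_zero]
  rcases le_total ξ t with hξt | htξ
  · rw [hftc, abs_of_nonneg (sub_nonneg.2 hξt)]
    exact hpiece hξ ht hξt
  · rw [hftc, integral_symm, neg_sq, abs_of_nonpos (sub_nonpos.2 htξ), neg_sub]
    exact hpiece ht hξ htξ

theorem integral_abs_sub_of_mem_Icc {ξ : ℝ} (hξ : ξ ∈ Icc a b) :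
    ∫ t in a..b, |t - ξ| = ((ξ - a) ^ 2 + (b - ξ) ^ 2) / 2 := by
  have hcont : Continuous fun t : ℝ => |t - ξ| := by fun_prop
  rw [← integral_add_adjacent_intervals (b := ξ) (hcont.intervalIntegrable _ _)
    (hcont.intervalIntegrable _ _)]
  have hleft : ∫ t in a..ξ, |t - ξ| = ∫ t in a..ξ, (ξ - t) := by
    refine integral_congr fun t ht => ?_
    rw [uIcc_of_le hξ.1] at ht
    simp only [abs_of_nonpos (sub_nonpos.2 ht.2), neg_sub]
  have hright : ∫ t in ξ..b, |t - ξ| = ∫ t in ξ..b, (t - ξ) := by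
    refine integral_congr fun t ht => ?_
    rw [uIcc_of_le hξ.2] at ht
    simp only [abs_of_nonneg (sub_nonneg.2 ht.1)]
  rw [hleft, hright,
    intervalIntegral.integral_sub intervalIntegrable_const intervalIntegral.intervalIntegrable_id,
    intervalIntegral.integral_sub intervalIntegral.intervalIntegrable_id intervalIntegrable_const,
    integral_id, integral_id, intervalIntegral.integral_const, intervalIntegral.integral_const,
    smul_eq_mul, smul_eq_mul]
  ring

theorem integral_sq_le_of_hasDerivAt_of_eq_zero {ξ : ℝ} (hξ : ξ ∈ Icc a b)
    (hd : ∀ t, HasDerivAt f (f' t) t) (hf' : IntervalIntegrable f' volume a b)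
    (hf'2 : IntervalIntegrable (fun t => f' t ^ 2) volume a b) (h0 : f ξ = 0) :
    ∫ t in a..b, f t ^ 2 ≤ (b - a) ^ 2 / 2 * ∫ t in a..b, f' t ^ 2 := by
  have hab : a ≤ b := hξ.1.trans hξ.2
  have hf : Continuous f := continuous_iff_continuousAt.2 fun t => (hd t).continuousAt
  calc ∫ t in a..b, f t ^ 2 ≤ ∫ t in a..b, |t - ξ| * ∫ s in a..b, f' s ^ 2 :=
        integral_mono_on hab ((by fun_prop : Continuous fun t => f t ^ 2).intervalIntegrable _ _)
          ((by fun_prop : Continuous fun t => |t - ξ| * _).intervalIntegrable _ _)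
          fun t ht => sq_le_abs_sub_mul_integral_sq_of_hasDerivAt hξ ht hd hf' hf'2 h0
    _ = ((ξ - a) ^ 2 + (b - ξ) ^ 2) / 2 * ∫ s in a..b, f' s ^ 2 := by
        rw [intervalIntegral.integral_mul_const, integral_abs_sub_of_mem_Icc hξ]
    _ ≤ (b - a) ^ 2 / 2 * ∫ t in a..b, f' t ^ 2 := by
        gcongr
        · exact integral_nonneg hab fun _ _ => sq_nonneg _
        · nlinarith [mul_nonneg (sub_nonneg.2 hξ.1) (sub_nonneg.2 hξ.2)]

theorem integral_sq_sub_le_of_eq_affine {y y' E : ℝ → ℝ} {ν γ ζ : ℝ}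
    (hy : ∀ t, HasDerivAt y (y' t) t) (hy' : Continuous y')
    (hE : ∀ t ∈ Icc a b, E t = ν + γ * t) (hζ : ζ ∈ Icc a b) (hyζ : y ζ = E ζ) :
    ∫ t in a..b, (y t - E t) ^ 2 ≤ (b - a) ^ 2 / 2 * ∫ t in a..b, (y' t - γ) ^ 2 := by
  have hlin : ∀ t, HasDerivAt (fun t => ν + γ * t) γ t := fun t => by
    simpa using ((hasDerivAt_id t).const_mul γ).const_add ν
  rw [integral_congr fun t ht => by rw [hE t (uIcc_of_le (hζ.1.trans hζ.2) ▸ ht)]]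
  exact integral_sq_le_of_hasDerivAt_of_eq_zero hζ (fun t => (hy t).sub (hlin t))
    (Continuous.intervalIntegrable (by fun_prop) _ _)
    (Continuous.intervalIntegrable (by fun_prop) _ _) (by rw [hyζ, hE ζ hζ, sub_self])

theorem sub_pow_three_mul_sq_le_integral_sq (hab : a ≤ b) {α β : ℝ}
    (hf : ∀ t ∈ Icc a b, f t = α + β * t) :
    (b - a) ^ 3 * β ^ 2 ≤ 12 * ∫ t in a..b, f t ^ 2 := by
  have hsq : ∀ t ∈ uIcc a b, f t ^ 2 = α ^ 2 + 2 * α * β * t + β ^ 2 * t ^ 2 := fun t ht => by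
    rw [hf t (uIcc_of_le hab ▸ ht)]; ring
  rw [integral_congr hsq, intervalIntegral.integral_add
      (Continuous.intervalIntegrable (by fun_prop) _ _)
      (Continuous.intervalIntegrable (by fun_prop) _ _),
    intervalIntegral.integral_add intervalIntegrable_const
      (Continuous.intervalIntegrable (by fun_prop) _ _),
    intervalIntegral.integral_const, intervalIntegral.integral_const_mul,
    intervalIntegral.integral_const_mul, integral_id, integral_pow, smul_eq_mul]
  nlinarith [mul_nonneg (sub_nonneg.2 hab) (sq_nonneg (2 * α + β * (a + b)))]

theorem sqrt_integral_sq_add_const_le (hab : a ≤ b) (hf : IntervalIntegrable f volume a b)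
    (hf2 : IntervalIntegrable (fun t => f t ^ 2) volume a b) (k : ℝ) :
    √(∫ t in a..b, (f t + k) ^ 2) ≤ √(∫ t in a..b, f t ^ 2) + |k| * √(b - a) := by
  have hF : 0 ≤ ∫ t in a..b, f t ^ 2 := integral_nonneg hab fun _ _ => sq_nonneg _
  have hmean : |∫ t in a..b, f t| ≤ √(b - a) * √(∫ t in a..b, f t ^ 2) := by
    rw [← Real.sqrt_mul (sub_nonneg.2 hab), ← Real.sqrt_sq_eq_abs]
    exact Real.sqrt_le_sqrt (sq_integral_le_mul_integral_sq hab hf hf2)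
  have hexpand : ∫ t in a..b, (f t + k) ^ 2 =
      (∫ t in a..b, f t ^ 2) + 2 * k * (∫ t in a..b, f t) + k ^ 2 * (b - a) := by
    simp_rw [add_sq]
    rw [intervalIntegral.integral_add (hf2.add ((hf.const_mul _).mul_const _))
        intervalIntegrable_const,
      intervalIntegral.integral_add hf2 ((hf.const_mul _).mul_const _),
      intervalIntegral.integral_mul_const, intervalIntegral.integral_const_mul,
      intervalIntegral.integral_const, smul_eq_mul]
    ring
  rw [Real.sqrt_le_left (by positivity), hexpand]
  have hk : 2 * k * ∫ t in a..b, f t ≤ 2 * |k| * (√(b - a) * √(∫ t in a..b, f t ^ 2)) := by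
    calc 2 * k * ∫ t in a..b, f t ≤ 2 * |k| * |∫ t in a..b, f t| := by
          rw [mul_assoc, mul_assoc]
          exact mul_le_mul_of_nonneg_left ((le_abs_self _).trans (abs_mul _ _).le) zero_le_two
      _ ≤ _ := by gcongr
  nlinarith [Real.sq_sqrt hF, Real.sq_sqrt (sub_nonneg.2 hab), sq_abs k, sq_nonneg k]

theorem integral_sq_sub_le_of_integral_mul_eq (hab : a ≤ b) {y Q E : ℝ → ℝ}
    (hy : ContinuousOn y (Icc a b)) (hQ : ContinuousOn Q (Icc a b))
    (hE : ContinuousOn E (Icc a b))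
    (hproj : ∫ t in a..b, Q t * (Q t - E t) = ∫ t in a..b, y t * (Q t - E t)) :
    ∫ t in a..b, (Q t - E t) ^ 2 ≤ ∫ t in a..b, (y t - E t) ^ 2 := by
  have hint : ∀ {u : ℝ → ℝ}, ContinuousOn u (Icc a b) → IntervalIntegrable u volume a b :=
    fun hu => hu.intervalIntegrable_of_Icc hab
  have hpyth : ∫ t in a..b, (y t - E t) ^ 2 = (∫ t in a..b, (Q t - E t) ^ 2) +
      (∫ t in a..b, (y t - Q t) ^ 2) +
      2 * ((∫ t in a..b, y t * (Q t - E t)) - ∫ t in a..b, Q t * (Q t - E t)) := by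
    rw [← intervalIntegral.integral_sub (hint (by fun_prop)) (hint (by fun_prop)),
      ← intervalIntegral.integral_const_mul, ← intervalIntegral.integral_add
        (hint (by fun_prop)) (hint (by fun_prop)),
      ← intervalIntegral.integral_add (hint (by fun_prop)) ((hint (by fun_prop)).const_mul 2)]
    exact integral_congr fun t _ => by ring
  rw [hpyth, hproj, sub_self, mul_zero, add_zero, le_add_iff_nonneg_right]
  exact integral_nonneg hab fun _ _ => sq_nonneg _

theorem eqOn_deriv_of_eq_affine {α c : ℝ} {Q : ℝ → ℝ}
    (hQ : ∀ t ∈ Icc a b, Q t = α + c * t) : EqOn (deriv Q) (fun _ => c) (Ioo a b) := by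
  intro t ht
  have hloc : Q =ᶠ[nhds t] fun s => α + c * s :=
    Filter.eventuallyEq_of_mem (isOpen_Ioo.mem_nhds ht) fun s hs => hQ s (Ioo_subset_Icc_self hs)
  rw [hloc.deriv_eq]
  simp

theorem IntervalIntegrable.of_sq (hf : AEStronglyMeasurable f volume)
    (hf2 : IntervalIntegrable (fun t => f t ^ 2) volume a b) :
    IntervalIntegrable f volume a b := by
  refine IntervalIntegrable.mono_fun' (g := fun t => 1 + f t ^ 2)
    (intervalIntegrable_const.add hf2) hf.restrict (ae_of_all _ fun t => ?_)
  simp only [Real.norm_eq_abs]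
  nlinarith [sq_abs (f t), sq_nonneg (|f t| - 1)]

end IntervalInequalities

theorem sqrt_sum_le_sqrt_sum_add_sqrt_sum {ι : Type*} {s : Finset ι} {a v w : ι → ℝ}
    (hv : ∀ i ∈ s, 0 ≤ v i) (hw : ∀ i ∈ s, 0 ≤ w i)
    (hle : ∀ i ∈ s, √(a i) ≤ √(v i) + √(w i)) :
    √(∑ i ∈ s, a i) ≤ √(∑ i ∈ s, v i) + √(∑ i ∈ s, w i) := by
  have hcross : ∑ i ∈ s, √(v i) * √(w i) ≤ √(∑ i ∈ s, v i) * √(∑ i ∈ s, w i) := by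
    have := Real.sum_mul_le_sqrt_mul_sqrt s (fun i => √(v i)) (fun i => √(w i))
    rwa [Finset.sum_congr rfl fun i hi => Real.sq_sqrt (hv i hi),
      Finset.sum_congr rfl fun i hi => Real.sq_sqrt (hw i hi)] at this
  have hpoint : ∀ i ∈ s, a i ≤ v i + 2 * (√(v i) * √(w i)) + w i := fun i hi => by
    have := (Real.sqrt_le_left (by positivity)).1 (hle i hi)
    nlinarith [Real.sq_sqrt (hv i hi), Real.sq_sqrt (hw i hi)]
  rw [Real.sqrt_le_left (by positivity)]
  calc ∑ i ∈ s, a i ≤ ∑ i ∈ s, (v i + 2 * (√(v i) * √(w i)) + w i) := Finset.sum_le_sum hpoint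
    _ = ∑ i ∈ s, v i + 2 * ∑ i ∈ s, √(v i) * √(w i) + ∑ i ∈ s, w i := by
        rw [Finset.sum_add_distrib, Finset.sum_add_distrib, Finset.mul_sum]
    _ ≤ _ := by
        nlinarith [Real.sq_sqrt (Finset.sum_nonneg hv), Real.sq_sqrt (Finset.sum_nonneg hw)]

theorem sqrt_sum_le_of_cellwise_bounds {ι : Type*} {s : Finset ι} {h : ℝ} (hh : 0 < h)
    {a v w e d B : ι → ℝ} (hv : ∀ i ∈ s, 0 ≤ v i) (hw : ∀ i ∈ s, 0 ≤ w i)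
    (hav : ∀ i ∈ s, √(a i) ≤ √(v i) + √(w i)) (hvB : ∀ i ∈ s, v i ≤ h ^ 2 / 2 * B i)
    (hev : ∀ i ∈ s, e i ≤ h ^ 2 / 2 * v i) (hwd : ∀ i ∈ s, h ^ 2 * w i ≤ 12 * d i)
    (hde : ∑ i ∈ s, d i ≤ ∑ i ∈ s, e i) :
    √(∑ i ∈ s, a i) ≤ (√2 / 2 + √3) * h * √(∑ i ∈ s, B i) := by
  have hvB' : ∑ i ∈ s, v i ≤ h ^ 2 / 2 * ∑ i ∈ s, B i := by
    rw [Finset.mul_sum]; exact Finset.sum_le_sum hvB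
  have hev' : ∑ i ∈ s, e i ≤ h ^ 2 / 2 * ∑ i ∈ s, v i := by
    rw [Finset.mul_sum]; exact Finset.sum_le_sum hev
  have hwd' : h ^ 2 * ∑ i ∈ s, w i ≤ 12 * ∑ i ∈ s, d i := by
    rw [Finset.mul_sum, Finset.mul_sum]; exact Finset.sum_le_sum hwd
  have hwv : ∑ i ∈ s, w i ≤ 6 * ∑ i ∈ s, v i :=
    le_of_mul_le_mul_left (a := h ^ 2) (by linarith) (by positivity)
  have hsqrt : ∀ {x c : ℝ}, 0 ≤ c → x ≤ c ^ 2 * ∑ i ∈ s, B i → √x ≤ c * √(∑ i ∈ s, B i) :=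
    fun hc hx => (Real.sqrt_le_sqrt hx).trans_eq
      (by rw [Real.sqrt_mul (sq_nonneg _), Real.sqrt_sq hc])
  calc √(∑ i ∈ s, a i) ≤ √(∑ i ∈ s, v i) + √(∑ i ∈ s, w i) :=
        sqrt_sum_le_sqrt_sum_add_sqrt_sum hv hw hav
    _ ≤ √2 / 2 * h * √(∑ i ∈ s, B i) + √3 * h * √(∑ i ∈ s, B i) := by
        gcongr
        · exact hsqrt (by positivity) (by rw [mul_pow, div_pow, Real.sq_sqrt zero_le_two]; linarith)
        · exact hsqrt (by positivity) (by rw [mul_pow, Real.sq_sqrt zero_le_three]; linarith)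
    _ = (√2 / 2 + √3) * h * √(∑ i ∈ s, B i) := by ring

section UniformMesh

variable {n : ℕ} {h : ℝ}

theorem integral_eq_sum_cells (hnh : n * h = 1) {f : ℝ → ℝ}
    (hf : ∀ i < n, IntervalIntegrable f volume (i * h) ((i + 1 : ℕ) * h)) :
    ∫ t in (0 : ℝ)..1, f t = ∑ i ∈ Finset.range n, ∫ t in (i * h)..((i + 1 : ℕ) * h), f t := by
  have := sum_integral_adjacent_intervals (a := fun i : ℕ => (i : ℝ) * h) hf
  simp only [Nat.cast_zero, zero_mul, hnh] at this
  exact this.symm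

theorem uIcc_cell_subset (hh : 0 ≤ h) (hnh : n * h = 1) {i : ℕ} (hi : i < n) :
    uIcc ((i : ℝ) * h) ((i + 1 : ℕ) * h) ⊆ uIcc 0 1 := by
  rw [uIcc_of_le (by gcongr; simp), uIcc_of_le zero_le_one, ← hnh]
  exact Icc_subset_Icc (by positivity) (by gcongr; exact_mod_cast hi)

theorem integral_sq_sub_deriv_eq_sum_cells (hh : 0 ≤ h) (hnh : n * h = 1)
    {g Q : ℝ → ℝ} (hg : Continuous g) {α c : ℕ → ℝ}
    (hQ : ∀ i < n, ∀ t ∈ Icc (i * h) ((i + 1 : ℕ) * h), Q t = α i + c i * t) :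
    ∫ t in (0 : ℝ)..1, (g t - deriv Q t) ^ 2 =
      ∑ i ∈ Finset.range n, ∫ t in (i * h)..((i + 1 : ℕ) * h), (g t - c i) ^ 2 := by
  have hcell : ∀ i < n, EqOn (fun t => (g t - deriv Q t) ^ 2) (fun t => (g t - c i) ^ 2)
      (uIoo (i * h) ((i + 1 : ℕ) * h)) := fun i hi t ht => by
    rw [uIoo_of_le (by gcongr; simp)] at ht
    simp only [eqOn_deriv_of_eq_affine (hQ i hi) ht]
  rw [integral_eq_sum_cells hnh fun i hi =>
    (Continuous.intervalIntegrable (by fun_prop) _ _).congr_uIoo (hcell i hi).symm]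
  exact Finset.sum_congr rfl fun i hi => integral_congr_uIoo (hcell i (Finset.mem_range.1 hi))

theorem sqrt_integral_sq_deriv_sub_le_of_cellwise (hh : 0 < h) (hnh : n * h = 1)
    {y y' y'' Q E : ℝ → ℝ} (hy : ∀ t, HasDerivAt y (y' t) t)
    (hy' : ∀ t, HasDerivAt y' (y'' t) t)
    (hy''2 : IntervalIntegrable (fun t => y'' t ^ 2) volume 0 1)
    (hQ : ContinuousOn Q (Icc 0 1)) (hE : ContinuousOn E (Icc 0 1))
    (hQcell : ∀ i < n, ∃ α c : ℝ, ∀ t ∈ Icc (i * h) ((i + 1 : ℕ) * h), Q t = α + c * t)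
    (hEcell : ∀ i < n, ∃ ν γ : ℝ, (∀ t ∈ Icc (i * h) ((i + 1 : ℕ) * h), E t = ν + γ * t) ∧
      (∃ ξ ∈ Icc (i * h) ((i + 1 : ℕ) * h), y' ξ = γ) ∧
      ∃ ζ ∈ Icc (i * h) ((i + 1 : ℕ) * h), y ζ = E ζ)
    (hQE : ∫ t in (0 : ℝ)..1, (Q t - E t) ^ 2 ≤ ∫ t in (0 : ℝ)..1, (y t - E t) ^ 2) :
    √(∫ t in (0 : ℝ)..1, (y' t - deriv Q t) ^ 2) ≤
      (√2 / 2 + √3) * h * √(∫ t in (0 : ℝ)..1, y'' t ^ 2) := by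
  choose! α c hQc using hQcell
  choose! ν γ hEc hξ hζ using hEcell
  have hle : ∀ i : ℕ, (i : ℝ) * h ≤ (i + 1 : ℕ) * h := fun i => by gcongr; simp
  have hlen : ∀ i : ℕ, ((i + 1 : ℕ) : ℝ) * h - i * h = h := fun i => by push_cast; ring
  have hsub : ∀ i < n, uIcc ((i : ℝ) * h) ((i + 1 : ℕ) * h) ⊆ uIcc 0 1 := fun i hi =>
    uIcc_cell_subset hh.le hnh hi
  have hyc : Continuous y := continuous_iff_continuousAt.2 fun t => (hy t).continuousAt
  have hy'c : Continuous y' := continuous_iff_continuousAt.2 fun t => (hy' t).continuousAt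
  have hy'' : IntervalIntegrable y'' volume 0 1 := by
    refine .of_sq ?_ hy''2
    rw [show y'' = deriv y' from funext fun t => (hy' t).deriv.symm]
    exact (measurable_deriv y').aestronglyMeasurable
  rw [integral_sq_sub_deriv_eq_sum_cells hh.le hnh hy'c hQc,
    integral_eq_sum_cells hnh fun i hi => hy''2.mono_set (hsub i hi)]
  rw [integral_eq_sum_cells hnh (f := fun t => (Q t - E t) ^ 2) fun i hi =>
      (((hQ.sub hE).pow 2).intervalIntegrable_of_Icc zero_le_one).mono_set (hsub i hi),
    integral_eq_sum_cells hnh (f := fun t => (y t - E t) ^ 2) fun i hi =>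
      (((hyc.continuousOn.sub hE).pow 2).intervalIntegrable_of_Icc zero_le_one).mono_set
        (hsub i hi)] at hQE
  refine sqrt_sum_le_of_cellwise_bounds hh
    (v := fun i => ∫ t in (i * h)..((i + 1 : ℕ) * h), (y' t - γ i) ^ 2)
    (w := fun i => (γ i - c i) ^ 2 * h) (fun i _ => integral_nonneg (hle i) fun _ _ => sq_nonneg _)
    (fun i _ => by positivity) (fun i hi => ?_) (fun i hi => ?_) (fun i hi => ?_)
    (fun i hi => ?_) hQE <;> rw [Finset.mem_range] at hi
  · have := sqrt_integral_sq_add_const_le (hle i) (f := fun t => y' t - γ i)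
      (Continuous.intervalIntegrable (by fun_prop) _ _)
      (Continuous.intervalIntegrable (by fun_prop) _ _) (γ i - c i)
    simp only [sub_add_sub_cancel, hlen] at this
    rwa [Real.sqrt_mul (sq_nonneg _), Real.sqrt_sq_eq_abs]
  · obtain ⟨ξ, hξmem, hξ⟩ := hξ i hi
    have := integral_sq_le_of_hasDerivAt_of_eq_zero hξmem (fun t => (hy' t).sub_const (γ i))
      (hy''.mono_set (hsub i hi)) (hy''2.mono_set (hsub i hi)) (by rw [hξ, sub_self])
    rwa [hlen] at this
  · obtain ⟨ζ, hζmem, hζ⟩ := hζ i hi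
    simpa only [hlen] using integral_sq_sub_le_of_eq_affine hy hy'c (hEc i hi) hζmem hζ
  · have := sub_pow_three_mul_sq_le_integral_sq (hle i) (f := fun t => Q t - E t)
      (α := α i - ν i) (β := c i - γ i) fun t ht => by rw [hQc i hi t ht, hEc i hi t ht]; ring
    rw [hlen, ← sub_sq_comm] at this
    linarith

end UniformMesh

namespace ModPW

variable {n : ℕ} {x : ℕ → ℝ} {f g : ℝ → ℝ}

theorem sub (hf : ModPW n x f) (hg : ModPW n x g) : ModPW n x fun t => f t - g t := by
  obtain ⟨hfc, hf0, hfn, hfi⟩ := hf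
  obtain ⟨hgc, hg0, hgn, hgi⟩ := hg
  refine ⟨hfc.sub hgc, fun t ht => by simp only [hf0 t ht, hg0 t ht],
    fun t ht => by simp only [hfn t ht, hgn t ht], fun i hi1 hi2 => ?_⟩
  obtain ⟨α, β, hf⟩ := hfi i hi1 hi2
  obtain ⟨α', β', hg⟩ := hgi i hi1 hi2
  exact ⟨α - α', β - β', fun t ht => by simp only [hf t ht, hg t ht]; ring⟩

theorem exists_affine_on_cell (hf : ModPW n x f) {i : ℕ} (hi : i < n) :
    ∃ α β : ℝ, ∀ t ∈ Icc (x i) (x (i + 1)), f t = α + β * t := by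
  rcases Nat.eq_zero_or_pos i with rfl | hi0
  · exact ⟨f (x 1), 0, fun t ht => by rw [hf.2.1 t ht]; ring⟩
  by_cases hlast : i = n - 1
  · subst hlast
    rw [Nat.sub_add_cancel (by omega)]
    exact ⟨f (x (n - 1)), 0, fun t ht => by rw [hf.2.2.1 t ht]; ring⟩
  exact hf.2.2.2 i hi0 (by omega)

end ModPW

section Interpolation

def hat (u : ℝ) : ℝ := max 0 (1 - |u|)

theorem continuous_hat : Continuous hat := by unfold hat; fun_prop

theorem hat_eq_zero {u : ℝ} (hu : 1 ≤ |u|) : hat u = 0 := max_eq_left (by linarith)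

theorem hat_eq_one_sub_abs {u : ℝ} (hu : |u| ≤ 1) : hat u = 1 - |u| := max_eq_right (by linarith)

noncomputable def pwLinear (h : ℝ) (n : ℕ) (z : ℕ → ℝ) (t : ℝ) : ℝ :=
  ∑ j ∈ Finset.range (n + 1), z j * hat (t / h - j)

theorem continuous_pwLinear (h : ℝ) (n : ℕ) (z : ℕ → ℝ) : Continuous (pwLinear h n z) := by
  unfold pwLinear; have := continuous_hat; fun_prop

theorem pwLinear_eq_of_mem_Icc {h : ℝ} (hh : 0 < h) {n : ℕ} (z : ℕ → ℝ) {i : ℕ} (hi : i < n)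
    {t : ℝ} (ht : t ∈ Icc (i * h) ((i + 1 : ℕ) * h)) :
    pwLinear h n z t = z i + (z (i + 1) - z i) / h * (t - i * h) := by
  have hu : t / h ∈ Icc (i : ℝ) (i + 1) := by
    push_cast at ht
    exact ⟨(le_div_iff₀ hh).2 ht.1, (div_le_iff₀ hh).2 ht.2⟩
  have hpair : {i, i + 1} ⊆ Finset.range (n + 1) := by
    intro j hj
    simp only [Finset.mem_insert, Finset.mem_singleton] at hj
    simp only [Finset.mem_range]
    omega
  unfold pwLinear
  rw [← Finset.sum_subset hpair, Finset.sum_pair (by omega)]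
  · have habs₀ : |t / h - i| = t / h - i := abs_of_nonneg (by linarith [hu.1])
    have habs₁ : |t / h - ↑(i + 1)| = ↑(i + 1) - t / h := by
      rw [abs_of_nonpos (by push_cast; linarith [hu.2]), neg_sub]
    rw [hat_eq_one_sub_abs (by rw [habs₀]; linarith [hu.2]),
      hat_eq_one_sub_abs (by rw [habs₁]; push_cast; linarith [hu.1]), habs₀, habs₁]
    field_simp
    push_cast
    ring
  · intro j _ hj
    simp only [Finset.mem_insert, Finset.mem_singleton, not_or] at hj
    rw [hat_eq_zero, mul_zero]
    rcases Nat.lt_or_gt_of_ne hj.1 with hji | hji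
    · have : (j : ℝ) + 1 ≤ i := by exact_mod_cast hji
      rw [abs_of_nonneg] <;> linarith [hu.1]
    · have : (i : ℝ) + 2 ≤ j := by exact_mod_cast (by omega : i + 2 ≤ j)
      rw [abs_of_nonpos] <;> linarith [hu.2]

theorem pwLinear_eq_of_mem_Icc_of_eq {h : ℝ} (hh : 0 < h) {n : ℕ} {z : ℕ → ℝ} {i : ℕ}
    (hi : i < n) (hz : z (i + 1) = z i) {t : ℝ} (ht : t ∈ Icc (i * h) ((i + 1 : ℕ) * h)) :
    pwLinear h n z t = z i := by
  rw [pwLinear_eq_of_mem_Icc hh z hi ht, hz, sub_self, zero_div, zero_mul, add_zero]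

theorem pwLinear_node {h : ℝ} (hh : 0 < h) {n : ℕ} (z : ℕ → ℝ) {j : ℕ} (hj : j < n) :
    pwLinear h n z (j * h) = z j := by
  rw [pwLinear_eq_of_mem_Icc hh z hj ⟨le_rfl, by gcongr; simp⟩, sub_self, mul_zero, add_zero]

/-- Clamping the node index to `[1, n - 1]` makes the interpolant constant on the two boundary
cells, as the elements of `S̃_h¹` are. -/
noncomputable def interpNodes (n : ℕ) (h : ℝ) (y : ℝ → ℝ) (j : ℕ) : ℝ :=
  y ((max 1 (min j (n - 1)) : ℕ) * h)

noncomputable def interp (n : ℕ) (h : ℝ) (y : ℝ → ℝ) : ℝ → ℝ :=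
  pwLinear h n (interpNodes n h y)

variable {n : ℕ} {h : ℝ} {y : ℝ → ℝ}

theorem interpNodes_of_mem {j : ℕ} (hj1 : 1 ≤ j) (hj2 : j ≤ n - 1) :
    interpNodes n h y j = y (j * h) := by
  rw [interpNodes, show max 1 (min j (n - 1)) = j by omega]

theorem interpNodes_one (hn : 2 ≤ n) : interpNodes n h y 1 = interpNodes n h y 0 := by
  simp only [interpNodes, show max 1 (min 0 (n - 1)) = max 1 (min 1 (n - 1)) by omega]

theorem interpNodes_last : interpNodes n h y n = interpNodes n h y (n - 1) := by
  simp only [interpNodes, show min n (n - 1) = min (n - 1) (n - 1) by omega]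

theorem interp_modPW (hh : 0 < h) (hn : 2 ≤ n) (y : ℝ → ℝ) :
    ModPW n (fun i => (i : ℝ) * h) (interp n h y) := by
  have hlast : n - 1 + 1 = n := by omega
  refine ⟨(continuous_pwLinear h n _).continuousOn, fun t ht => ?_, fun t ht => ?_,
    fun i hi1 hi2 => ?_⟩
  · rw [interp, pwLinear_eq_of_mem_Icc_of_eq hh (by omega) (interpNodes_one hn) ht,
      pwLinear_eq_of_mem_Icc_of_eq hh (by omega) (interpNodes_one hn) ⟨by gcongr; simp, le_rfl⟩]
  · have hz : interpNodes n h y (n - 1 + 1) = interpNodes n h y (n - 1) := by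
      rw [hlast, interpNodes_last]
    rw [← hlast] at ht
    rw [interp, pwLinear_eq_of_mem_Icc_of_eq hh (by omega) hz ht,
      pwLinear_eq_of_mem_Icc_of_eq hh (by omega) hz ⟨le_rfl, by gcongr; simp⟩]
  · set z := interpNodes n h y
    refine ⟨z i - (z (i + 1) - z i) / h * (i * h), (z (i + 1) - z i) / h, fun t ht => ?_⟩
    rw [interp, pwLinear_eq_of_mem_Icc hh z (by omega) ht]
    ring

theorem exists_interp_cell_data (hh : 0 < h) (hnh : n * h = 1) (hn : 2 ≤ n) {y' : ℝ → ℝ}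
    (hy : ∀ t, HasDerivAt y (y' t) t) (hb0 : y' 0 = 0) (hb1 : y' 1 = 0) {i : ℕ} (hi : i < n) :
    ∃ ν γ : ℝ, (∀ t ∈ Icc (i * h) ((i + 1 : ℕ) * h), interp n h y t = ν + γ * t) ∧
      (∃ ξ ∈ Icc (i * h) ((i + 1 : ℕ) * h), y' ξ = γ) ∧
      ∃ ζ ∈ Icc (i * h) ((i + 1 : ℕ) * h), y ζ = interp n h y ζ := by
  have hz₀ := interpNodes_one (h := h) (y := y) hn
  have hzₙ := interpNodes_last (n := n) (h := h) (y := y)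
  have hzᵢ : ∀ j, 1 ≤ j → j ≤ n - 1 → interpNodes n h y j = y (j * h) :=
    fun _ => interpNodes_of_mem
  set z := interpNodes n h y
  have hcell : (i : ℝ) * h < (i + 1 : ℕ) * h := by gcongr; simp
  refine ⟨z i - (z (i + 1) - z i) / h * (i * h), (z (i + 1) - z i) / h,
    fun t ht => by rw [interp, pwLinear_eq_of_mem_Icc hh z hi ht]; ring, ?_, ?_⟩
  · rcases Nat.eq_zero_or_pos i with rfl | hi0
    · refine ⟨0, by simp [hh.le], ?_⟩
      rw [hb0, zero_add, hz₀, sub_self, zero_div]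
    by_cases hlast : i + 1 = n
    · refine ⟨1, ⟨?_, ?_⟩, ?_⟩
      · rw [← hnh]; gcongr
      · rw [hlast, hnh]
      · rw [hb1, hlast, show i = n - 1 by omega, hzₙ, sub_self, zero_div]
    obtain ⟨ξ, hξ, hslope⟩ := exists_hasDerivAt_eq_slope y y'
      hcell (fun t _ => (hy t).continuousAt.continuousWithinAt)
      (fun t _ => hy t)
    refine ⟨ξ, Ioo_subset_Icc_self hξ, ?_⟩
    rw [hslope, hzᵢ i hi0 (by omega), hzᵢ (i + 1) (by omega) (by omega)]
    push_cast
    ring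
  · rcases Nat.eq_zero_or_pos i with rfl | hi0
    · refine ⟨(1 : ℕ) * h, ⟨by simp [hh.le], le_rfl⟩, ?_⟩
      rw [interp, pwLinear_node hh z (by omega), hzᵢ 1 le_rfl (by omega)]
    · refine ⟨i * h, ⟨le_rfl, hcell.le⟩, ?_⟩
      rw [interp, pwLinear_node hh z hi, hzᵢ i hi0 (by omega)]

end Interpolation

/-- H¹ error estimate for the L² projection Q_h onto S̃_h¹(0,1)
on the uniform mesh with size h, for y ∈ H²(0,1) with y'(0) = y'(1) = 0:
‖y' − (Q_h y)'‖_{L²(0,1)} ≤ (1/2)(√2 + 4√3) h ‖y''‖_{L²(0,1)}. -/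
theorem stmt_11
    (n : ℕ) (hn : 2 ≤ n) (h : ℝ) (hh : h = 1 / (n : ℝ))
    (y y' y'' Qy : ℝ → ℝ)
    (hy : ∀ t, HasDerivAt y (y' t) t)
    (hy' : ∀ t, HasDerivAt y' (y'' t) t)
    (hy''L2 : IntervalIntegrable (fun t => (y'' t) ^ 2) volume 0 1)
    (hb0 : y' 0 = 0) (hb1 : y' 1 = 0)
    (hQmem : ModPW n (fun i => (i : ℝ) * h) Qy)
    (hproj : ∀ yh : ℝ → ℝ, ModPW n (fun i => (i : ℝ) * h) yh →
      ∫ t in (0:ℝ)..1, Qy t * yh t = ∫ t in (0:ℝ)..1, y t * yh t) :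
    Real.sqrt (∫ t in (0:ℝ)..1, (y' t - deriv Qy t) ^ 2) ≤
      (1 / 2) * (Real.sqrt 2 + 4 * Real.sqrt 3) * h *
        Real.sqrt (∫ t in (0:ℝ)..1, (y'' t) ^ 2) := by
  have hpos : 0 < h := by rw [hh]; positivity
  have hnh : (n : ℝ) * h = 1 := by rw [hh]; field_simp
  have hE := interp_modPW hpos hn y
  have hQE := integral_sq_sub_le_of_integral_mul_eq zero_le_one
    (continuous_iff_continuousAt.2 fun t => (hy t).continuousAt).continuousOn hQmem.1 hE.1
    (hproj _ (hQmem.sub hE))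
  calc √(∫ t in (0:ℝ)..1, (y' t - deriv Qy t) ^ 2)
      ≤ (√2 / 2 + √3) * h * √(∫ t in (0:ℝ)..1, y'' t ^ 2) :=
        sqrt_integral_sq_deriv_sub_le_of_cellwise hpos hnh hy hy' hy''L2 hQmem.1 hE.1
          (fun _ hi => hQmem.exists_affine_on_cell hi)
          (fun _ hi => exists_interp_cell_data hpos hnh hn hy hb0 hb1 hi) hQE
    _ ≤ _ := by
        gcongr ?_ * _ * _
        linarith [Real.sqrt_nonneg 3]
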